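/- For 0 < β < 1/2, the j-th sine Fourier coefficient of the function h_β (defined below, extended oddly and 2-periodically) is 0 for even j and equals (12/(j³π³β²))·[sin(jπβ)/(jπβ) − cos(jπβ)] for odd j. -/

import Mathlib

/-!
The profile `hprofile β` is symmetric about `1/2` while `sin (jπx)` picks up the sign
`(-1)^(j+1)` under `x ↦ 1 - x`, so the coefficient is `(1 - (-1)^j)` times twice the integral
over `[0, 1/2]`. There `hcore β` is the cubic `x (3β² - x²) / (2β³)` up to `β` and `1` after it,
and both pieces integrate in closed form; for odd `j` the boundary term `cos (jπ/2)` vanishes.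
-/

open Real

noncomputable def hcore (β x : ℝ) : ℝ :=
  if x < β then (x / β + 1)^2 * (1 - x / (2 * β)) - 1 else 1

noncomputable def hprofile (β x : ℝ) : ℝ :=
  if x ≤ 1/2 then hcore β x else hcore β (1 - x)

open MeasureTheory intervalIntegral

theorem integral_zero_one_eq_integral_half_add_one_sub {f : ℝ → ℝ}
    (hf : IntervalIntegrable f volume 0 1) :
    ∫ x in (0:ℝ)..1, f x = ∫ x in (0:ℝ)..1/2, (f x + f (1 - x)) := by
  have h₁ : IntervalIntegrable f volume 0 (1/2) :=
    hf.mono_set (Set.uIcc_subset_uIcc (by simp) (by simp; norm_num))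
  have h₂ : IntervalIntegrable f volume (1/2) 1 :=
    hf.mono_set (Set.uIcc_subset_uIcc (by simp; norm_num) (by simp))
  have h₂' : IntervalIntegrable (fun x => f (1 - x)) volume 0 (1/2) := by
    convert (h₂.comp_sub_left 1).symm using 1 <;> norm_num
  rw [integral_add h₁ h₂', ← integral_add_adjacent_intervals h₁ h₂, integral_comp_sub_left]
  norm_num

theorem integral_mul_sin_of_symmetric {f : ℝ → ℝ} (hf : IntervalIntegrable f volume 0 1)
    (hsymm : ∀ x, f (1 - x) = f x) (j : ℕ) :
    ∫ x in (0:ℝ)..1, f x * sin (j * π * x) =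
      (1 - (-1) ^ j) * ∫ x in (0:ℝ)..1/2, f x * sin (j * π * x) := by
  rw [integral_zero_one_eq_integral_half_add_one_sub (hf.mul_continuousOn (by fun_prop)),
    ← intervalIntegral.integral_const_mul]
  congr 1 with x
  rw [hsymm, mul_sub, mul_one, sin_nat_mul_pi_sub]
  ring

/-- Integration by parts three times; no remainder is left because `p₃` is constant. -/
theorem hasDerivAt_tabular_sin {p p₁ p₂ : ℝ → ℝ} {p₃ a x : ℝ} (ha : a ≠ 0)
    (h₀ : HasDerivAt p (p₁ x) x) (h₁ : HasDerivAt p₁ (p₂ x) x) (h₂ : HasDerivAt p₂ p₃ x) :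
    HasDerivAt (fun x => -p x * cos (a * x) / a + p₁ x * sin (a * x) / a ^ 2
      + p₂ x * cos (a * x) / a ^ 3 - p₃ * sin (a * x) / a ^ 4) (p x * sin (a * x)) x := by
  have hs : HasDerivAt (fun x => sin (a * x)) (cos (a * x) * a) x := by
    simpa using ((hasDerivAt_id x).const_mul a).sin
  have hc : HasDerivAt (fun x => cos (a * x)) (-sin (a * x) * a) x := by
    simpa using ((hasDerivAt_id x).const_mul a).cos
  refine (((((h₀.neg.mul hc).div_const a).add ((h₁.mul hs).div_const (a ^ 2))).add
    ((h₂.mul hc).div_const (a ^ 3))).sub ((hs.const_mul p₃).div_const (a ^ 4))).congr_deriv ?_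
  simp only [Pi.neg_apply]
  field_simp
  ring

noncomputable def hcoreCubic (β x : ℝ) : ℝ := x * (3 * β ^ 2 - x ^ 2) / (2 * β ^ 3)

theorem hcore_eq_hcoreCubic_min {β : ℝ} (hβ : β ≠ 0) (x : ℝ) :
    hcore β x = hcoreCubic β (min x β) := by
  unfold hcore hcoreCubic
  split_ifs with hx
  · rw [min_eq_left hx.le]
    field_simp
    ring
  · rw [min_eq_right (not_lt.mp hx)]
    field_simp
    ring

theorem continuous_hcore {β : ℝ} (hβ : β ≠ 0) : Continuous (hcore β) := by
  simp only [funext (hcore_eq_hcoreCubic_min hβ), hcoreCubic]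
  fun_prop

theorem hprofile_eq_hcore_min (β x : ℝ) : hprofile β x = hcore β (min x (1 - x)) := by
  unfold hprofile
  split_ifs with hx
  · rw [min_eq_left (by linarith)]
  · rw [min_eq_right (by linarith)]

theorem hprofile_one_sub (β x : ℝ) : hprofile β (1 - x) = hprofile β x := by
  rw [hprofile_eq_hcore_min, hprofile_eq_hcore_min, sub_sub_cancel, min_comm]

theorem continuous_hprofile {β : ℝ} (hβ : β ≠ 0) : Continuous (hprofile β) := by
  simp only [funext (hprofile_eq_hcore_min β)]
  exact (continuous_hcore hβ).comp (by fun_prop)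

theorem integral_hcoreCubic_mul_sin {β a : ℝ} (hβ : β ≠ 0) (ha : a ≠ 0) :
    ∫ x in (0:ℝ)..β, hcoreCubic β x * sin (a * x) =
      3 * (sin (a * β) - a * β * cos (a * β)) / (a ^ 4 * β ^ 3) - cos (a * β) / a := by
  have hderiv (x : ℝ) := hasDerivAt_tabular_sin (p := hcoreCubic β)
      (p₁ := fun x => 3 * (β ^ 2 - x ^ 2) / (2 * β ^ 3)) (p₂ := fun x => -3 * x / β ^ 3)
      (p₃ := -3 / β ^ 3) (x := x) ha ?_ ?_ ?_
  · rw [integral_eq_sub_of_hasDerivAt (fun x _ => hderiv x)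
      (Continuous.intervalIntegrable (by unfold hcoreCubic; fun_prop) _ _)]
    simp only [hcoreCubic, mul_zero, sin_zero, cos_zero]
    field_simp
    ring
  · refine (((hasDerivAt_id x).mul ((hasDerivAt_pow 2 x).const_sub (3 * β ^ 2))).div_const
      (2 * β ^ 3)).congr_deriv ?_
    simp only [id]
    ring
  · refine (((hasDerivAt_pow 2 x).const_sub (β ^ 2)).const_mul 3 |>.div_const
      (2 * β ^ 3)).congr_deriv ?_
    field_simp
    ring
  · simpa using ((hasDerivAt_id x).const_mul (-3)).div_const (β ^ 3)

theorem integral_hcore_mul_sin {β a : ℝ} (hβ0 : 0 < β) (hβ : β ≤ 1/2) (ha : a ≠ 0) :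
    ∫ x in (0:ℝ)..1/2, hcore β x * sin (a * x) =
      3 * (sin (a * β) - a * β * cos (a * β)) / (a ^ 4 * β ^ 3) - cos (a / 2) / a := by
  have hint (u v : ℝ) : IntervalIntegrable (fun x => hcore β x * sin (a * x)) volume u v :=
    ((continuous_hcore hβ0.ne').mul (by fun_prop)).intervalIntegrable u v
  have hcubic : Set.EqOn (fun x => hcore β x * sin (a * x))
      (fun x => hcoreCubic β x * sin (a * x)) (Set.uIcc 0 β) := by
    intro x hx
    rw [Set.uIcc_of_le hβ0.le] at hx
    simp only [hcore_eq_hcoreCubic_min hβ0.ne', min_eq_left hx.2]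
  have hflat : Set.EqOn (fun x => hcore β x * sin (a * x))
      (fun x => sin (a * x)) (Set.uIcc β (1/2)) := by
    intro x hx
    rw [Set.uIcc_of_le hβ] at hx
    simp only [hcore, if_neg (not_lt.mpr hx.1), one_mul]
  rw [← integral_add_adjacent_intervals (hint 0 β) (hint β (1/2)), integral_congr hcubic,
    integral_congr hflat, integral_hcoreCubic_mul_sin hβ0.ne' ha, integral_comp_mul_left _ ha,
    integral_sin, smul_eq_mul, mul_one_div]
  field_simp
  ring

theorem stmt_7 (β : ℝ) (hβ0 : 0 < β) (hβ : β < 1/2) (j : ℕ) :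
    (2 * ∫ x in (0:ℝ)..1, hprofile β x * Real.sin (j * π * x)) =
      if Even j then 0
      else 12 / (j^3 * π^3 * β^2) *
        (Real.sin (j * π * β) / (j * π * β) - Real.cos (j * π * β)) := by
  have hhalf : Set.EqOn (fun x => hprofile β x * sin (j * π * x))
      (fun x => hcore β x * sin (j * π * x)) (Set.uIcc 0 (1/2)) := by
    intro x hx
    rw [Set.uIcc_of_le (by norm_num)] at hx
    simp only [hprofile, if_pos hx.2]
  rw [integral_mul_sin_of_symmetric ((continuous_hprofile hβ0.ne').intervalIntegrable _ _)
    (hprofile_one_sub β), integral_congr hhalf]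
  rcases Nat.even_or_odd j with hj | ⟨k, rfl⟩
  · simp [hj, hj.neg_one_pow]
  · have ha : ((2 * k + 1 : ℕ) : ℝ) * π ≠ 0 := by positivity
    have hcos : cos (((2 * k + 1 : ℕ) : ℝ) * π / 2) = 0 :=
      cos_eq_zero_iff.mpr ⟨k, by push_cast; ring⟩
    rw [integral_hcore_mul_sin hβ0 hβ.le ha, hcos, if_neg (Nat.not_even_iff_odd.mpr ⟨k, rfl⟩),
      Odd.neg_one_pow ⟨k, rfl⟩]
    field_simp
    ring
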